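/- Let O be the Hurwitz order in (−1,−1/Q). The quotient group O^×/{±1} has order 12, and the reduction map O^×/{±1} → (O/2O)^× is a bijection onto the image of (O/2O)^× (in particular (O/2O)^× has order 12 and every unit class mod 2O contains a unit of O, uniquely up to sign). -/

import Mathlib

/-!
In the basis `1, i, j, ω` of `O` the reduced norm is the integral form
`a² + b² + c² + d² + ad + bd + cd`, so units are the elements of norm 1, and `x ∈ O` is
invertible mod `2O` exactly when its norm is odd. Congruence mod `2O` is coordinatewise
congruence mod 2, so both quotients map to the parity vectors in `𝔽₂⁴` on which the reduced
form equals 1; there are 12 of them. Every such vector is the parity of a unit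
(`1, i, j, k, (±1 ± i ± j + k)/2`), and two units `u, u'` with the same parity agree up to
sign: writing `u - u' = 2w` and `u + u' = 2v`, the parallelogram law gives `N w + N v = 1`
with both norms in `ℕ`, so `w = 0` or `v = 0`.
-/

open scoped Quaternion

/-- The element `a·1 + b·i + c·j + d·ω` of the rational quaternions, where
`ω = (1+i+j+k)/2` is the Hurwitz unit. -/
noncomputable def hurElt (a b c d : ℤ) : ℍ[ℚ] :=
  ⟨(a : ℚ) + (d : ℚ)/2, (b : ℚ) + (d : ℚ)/2, (c : ℚ) + (d : ℚ)/2, (d : ℚ)/2⟩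

/-- The Hurwitz order: the `ℤ`-span of `1, i, j, (1+i+j+k)/2` in `(−1,−1/ℚ)`. -/
def Hur : Set ℍ[ℚ] := {x | ∃ a b c d : ℤ, x = hurElt a b c d}

/-- A unit of the Hurwitz order. -/
def hurUnit (x : ℍ[ℚ]) : Prop := x ∈ Hur ∧ ∃ y ∈ Hur, x * y = 1 ∧ y * x = 1

/-- `x` is invertible modulo `2O` in the Hurwitz order. -/
def hurUnitMod2 (x : ℍ[ℚ]) : Prop :=
  x ∈ Hur ∧ ∃ β ∈ Hur, (∃ w ∈ Hur, x * β - 1 = 2 * w) ∧ (∃ w ∈ Hur, β * x - 1 = 2 * w)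

namespace Quaternion

theorem normSq_add_add_normSq_sub {R : Type*} [CommRing R] (a b : ℍ[R]) :
    normSq (a + b) + normSq (a - b) = 2 * normSq a + 2 * normSq b := by
  simp only [normSq_def', re_add, imI_add, imJ_add, imK_add, re_sub, imI_sub, imJ_sub, imK_sub]
  ring

end Quaternion

open Quaternion

def hurNorm {R : Type*} [CommRing R] (a b c d : R) : R :=
  a ^ 2 + b ^ 2 + c ^ 2 + d ^ 2 + a * d + b * d + c * d

theorem Int.cast_hurNorm {R : Type*} [CommRing R] (a b c d : ℤ) :
    ((hurNorm a b c d : ℤ) : R) = hurNorm (a : R) b c d := by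
  simp only [hurNorm]; push_cast; ring

theorem hurNorm_nonneg (a b c d : ℤ) : 0 ≤ hurNorm a b c d := by
  have : 4 * hurNorm a b c d = (2 * a + d) ^ 2 + (2 * b + d) ^ 2 + (2 * c + d) ^ 2 + d ^ 2 := by
    simp only [hurNorm]; ring
  linarith [show 0 ≤ (2 * a + d) ^ 2 + (2 * b + d) ^ 2 + (2 * c + d) ^ 2 + d ^ 2 by positivity]

section hurElt

variable (a b c d a' b' c' d' : ℤ)

@[simp] theorem hurElt_re : (hurElt a b c d).re = a + d / 2 := rfl
@[simp] theorem hurElt_imI : (hurElt a b c d).imI = b + d / 2 := rfl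
@[simp] theorem hurElt_imJ : (hurElt a b c d).imJ = c + d / 2 := rfl
@[simp] theorem hurElt_imK : (hurElt a b c d).imK = d / 2 := rfl

theorem hurElt_mem : hurElt a b c d ∈ Hur := ⟨a, b, c, d, rfl⟩

theorem hurElt_add :
    hurElt a b c d + hurElt a' b' c' d' = hurElt (a + a') (b + b') (c + c') (d + d') := by
  ext <;> simp <;> ring

theorem hurElt_neg : -hurElt a b c d = hurElt (-a) (-b) (-c) (-d) := by
  ext <;> simp <;> ring

theorem hurElt_sub :
    hurElt a b c d - hurElt a' b' c' d' = hurElt (a - a') (b - b') (c - c') (d - d') := by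
  ext <;> simp <;> ring

theorem two_mul_hurElt : 2 * hurElt a b c d = hurElt (2 * a) (2 * b) (2 * c) (2 * d) := by
  simp only [two_mul, hurElt_add]

theorem star_hurElt : star (hurElt a b c d) = hurElt (a + d) (-b) (-c) (-d) := by
  ext <;> simp <;> ring

theorem normSq_hurElt : normSq (hurElt a b c d) = ((hurNorm a b c d : ℤ) : ℚ) := by
  rw [Int.cast_hurNorm, normSq_def']
  simp only [hurNorm, hurElt_re, hurElt_imI, hurElt_imJ, hurElt_imK]
  ring

variable {a b c d a' b' c' d'}

theorem hurElt_inj :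
    hurElt a b c d = hurElt a' b' c' d' ↔ a = a' ∧ b = b' ∧ c = c' ∧ d = d' := by
  refine ⟨fun h => ?_, by rintro ⟨rfl, rfl, rfl, rfl⟩; rfl⟩
  have h1 := congrArg QuaternionAlgebra.re h
  have h2 := congrArg QuaternionAlgebra.imI h
  have h3 := congrArg QuaternionAlgebra.imJ h
  have h4 := congrArg QuaternionAlgebra.imK h
  simp only [hurElt_re, hurElt_imI, hurElt_imJ, hurElt_imK] at h1 h2 h3 h4
  have hd : (d : ℚ) = d' := by linarith
  refine ⟨?_, ?_, ?_, ?_⟩ <;> refine Int.cast_inj (α := ℚ) |>.mp ?_ <;> linarith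

end hurElt

theorem one_eq_hurElt : (1 : ℍ[ℚ]) = hurElt 1 0 0 0 := by
  ext <;> simp

theorem one_add_two_mul_hurElt (a b c d : ℤ) :
    1 + 2 * hurElt a b c d = hurElt (1 + 2 * a) (2 * b) (2 * c) (2 * d) := by
  simp only [one_eq_hurElt, two_mul_hurElt, hurElt_add, zero_add]

theorem star_mem_Hur {x : ℍ[ℚ]} (hx : x ∈ Hur) : star x ∈ Hur := by
  obtain ⟨a, b, c, d, rfl⟩ := hx
  rw [star_hurElt]
  exact hurElt_mem _ _ _ _

theorem exists_normSq_eq_natCast {x : ℍ[ℚ]} (hx : x ∈ Hur) : ∃ n : ℕ, normSq x = n := by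
  obtain ⟨a, b, c, d, rfl⟩ := hx
  refine ⟨(hurNorm a b c d).toNat, ?_⟩
  rw [normSq_hurElt, ← Int.cast_natCast, Int.toNat_of_nonneg (hurNorm_nonneg a b c d)]

theorem hurUnit_iff {x : ℍ[ℚ]} : hurUnit x ↔ x ∈ Hur ∧ normSq x = 1 := by
  refine ⟨fun ⟨hx, y, hy, hxy, _⟩ => ⟨hx, ?_⟩,
    fun ⟨hx, hN⟩ => ⟨hx, star x, star_mem_Hur hx, ?_, ?_⟩⟩
  · obtain ⟨m, hm⟩ := exists_normSq_eq_natCast hx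
    obtain ⟨n, hn⟩ := exists_normSq_eq_natCast hy
    have hmn : ((m * n : ℕ) : ℚ) = 1 := by
      rw [Nat.cast_mul, ← hm, ← hn, ← map_mul, hxy, map_one]
    rw [hm, Nat.eq_one_of_mul_eq_one_right (m := m) (by exact_mod_cast hmn), Nat.cast_one]
  · rw [self_mul_star, hN, coe_one]
  · rw [star_mul_self, hN, coe_one]

/-- The `hurElt` coordinates mod 2; on `Hur` the rationals below are integers, so `num` reads
them off. -/
def hurParity (x : ℍ[ℚ]) : ZMod 2 × ZMod 2 × ZMod 2 × ZMod 2 :=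
  ((x.re - x.imK).num, (x.imI - x.imK).num, (x.imJ - x.imK).num, (2 * x.imK).num)

def parityNorm (p : ZMod 2 × ZMod 2 × ZMod 2 × ZMod 2) : ZMod 2 :=
  hurNorm p.1 p.2.1 p.2.2.1 p.2.2.2

theorem hurParity_hurElt (a b c d : ℤ) :
    hurParity (hurElt a b c d) = ((a : ZMod 2), (b : ZMod 2), (c : ZMod 2), (d : ZMod 2)) := by
  simp only [hurParity, hurElt_re, hurElt_imI, hurElt_imJ, hurElt_imK, add_sub_cancel_right,
    mul_div_cancel₀ _ (two_ne_zero' ℚ), Rat.num_intCast]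

theorem parityNorm_hurParity_hurElt (a b c d : ℤ) :
    parityNorm (hurParity (hurElt a b c d)) = ((hurNorm a b c d : ℤ) : ZMod 2) := by
  rw [hurParity_hurElt, parityNorm, Int.cast_hurNorm]

theorem hurUnitMod2_iff {x : ℍ[ℚ]} :
    hurUnitMod2 x ↔ x ∈ Hur ∧ parityNorm (hurParity x) = 1 := by
  refine ⟨fun ⟨hx, β, hβ, ⟨w, hw, hxβ⟩, _⟩ => ⟨hx, ?_⟩,
    fun ⟨hx, hN⟩ => ⟨hx, star x, star_mem_Hur hx, ?_, ?_⟩⟩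
  · obtain ⟨a, b, c, d, rfl⟩ := hx
    obtain ⟨a', b', c', d', rfl⟩ := hβ
    obtain ⟨p, q, r, s, rfl⟩ := hw
    rw [sub_eq_iff_eq_add', one_add_two_mul_hurElt] at hxβ
    have hnorm := congrArg normSq hxβ
    rw [map_mul, normSq_hurElt, normSq_hurElt, normSq_hurElt, ← Int.cast_mul,
      Int.cast_inj] at hnorm
    have hmod2 := congrArg (fun n : ℤ => (n : ZMod 2)) hnorm
    simp only [Int.cast_mul, Int.cast_hurNorm, Int.cast_add, Int.cast_one, Int.cast_ofNat]
      at hmod2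
    have hodd : hurNorm (1 + 2 * (p : ZMod 2)) (2 * q) (2 * r) (2 * s) = 1 := by
      simp [hurNorm, show (2 : ZMod 2) = 0 from rfl]
    rw [parityNorm_hurParity_hurElt, Int.cast_hurNorm]
    exact (by decide : ∀ u v : ZMod 2, u * v = 1 → u = 1) _ _ (hmod2.trans hodd)
  all_goals
    obtain ⟨a, b, c, d, rfl⟩ := hx
    rw [parityNorm_hurParity_hurElt, ZMod.intCast_eq_one_iff_odd] at hN
    obtain ⟨m, hm⟩ := hN
    refine ⟨hurElt m 0 0 0, hurElt_mem _ _ _ _, ?_⟩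
    simp only [self_mul_star, star_mul_self]
    rw [normSq_hurElt, hm, two_mul_hurElt]
    ext <;> simp

theorem exists_two_mul_iff_hurParity_eq {x y : ℍ[ℚ]} (hx : x ∈ Hur) (hy : y ∈ Hur) :
    (∃ w ∈ Hur, x - y = 2 * w) ↔ hurParity x = hurParity y := by
  obtain ⟨a, b, c, d, rfl⟩ := hx
  obtain ⟨a', b', c', d', rfl⟩ := hy
  simp only [hurParity_hurElt, Prod.mk.injEq, ZMod.intCast_eq_intCast_iff_dvd_sub, Nat.cast_ofNat,
    hurElt_sub]
  constructor
  · rintro ⟨w, ⟨p, q, r, s, rfl⟩, h⟩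
    rw [two_mul_hurElt, hurElt_inj] at h
    omega
  · rintro ⟨⟨p, hp⟩, ⟨q, hq⟩, ⟨r, hr⟩, ⟨s, hs⟩⟩
    refine ⟨hurElt (-p) (-q) (-r) (-s), hurElt_mem _ _ _ _, ?_⟩
    rw [two_mul_hurElt, hurElt_inj]
    omega

theorem hurParity_neg {x : ℍ[ℚ]} (hx : x ∈ Hur) : hurParity (-x) = hurParity x := by
  obtain ⟨a, b, c, d, rfl⟩ := hx
  simp only [hurElt_neg, hurParity_hurElt, Int.cast_neg, ZMod.neg_eq_self_mod_two]

theorem eq_or_eq_neg_of_sub_eq_two_mul {u u' w : ℍ[ℚ]} (hu : normSq u = 1) (hu' : u' ∈ Hur)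
    (hu'1 : normSq u' = 1) (hw : w ∈ Hur) (h : u - u' = 2 * w) : u = u' ∨ u = -u' := by
  have hv : u' + w ∈ Hur := by
    obtain ⟨a, b, c, d, rfl⟩ := hu'
    obtain ⟨p, q, r, s, rfl⟩ := hw
    rw [hurElt_add]
    exact hurElt_mem _ _ _ _
  have hsum : u + u' = 2 * (u' + w) := by
    rw [mul_add, ← h, two_mul]; abel
  obtain ⟨m, hm⟩ := exists_normSq_eq_natCast hw
  obtain ⟨n, hn⟩ := exists_normSq_eq_natCast hv
  have hpar := normSq_add_add_normSq_sub u u'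
  have hnorm2 : normSq (2 : ℍ[ℚ]) = 2 ^ 2 := by simpa using normSq_natCast (R := ℚ) 2
  rw [hsum, h, hu, hu'1, map_mul, map_mul, hm, hn, hnorm2] at hpar
  have hmn : n + m = 1 := by exact_mod_cast (by linarith : (n + m : ℚ) = 1)
  rcases Nat.add_eq_one_iff.mp hmn with ⟨hn0, -⟩ | ⟨-, hm0⟩
  · right
    rw [hn0, Nat.cast_zero, normSq_eq_zero] at hn
    rwa [hn, mul_zero, add_eq_zero_iff_eq_neg] at hsum
  · left
    rw [hm0, Nat.cast_zero, normSq_eq_zero] at hm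
    rw [← sub_eq_zero, h, hm, mul_zero]

theorem hurParity_eq_iff_of_hurUnit {u v : ℍ[ℚ]} (hu : hurUnit u) (hv : hurUnit v) :
    hurParity u = hurParity v ↔ u = v ∨ u = -v := by
  refine ⟨fun h => ?_, ?_⟩
  · obtain ⟨w, hw, huv⟩ := (exists_two_mul_iff_hurParity_eq hu.1 hv.1).mpr h
    exact eq_or_eq_neg_of_sub_eq_two_mul (hurUnit_iff.mp hu).2 hv.1 (hurUnit_iff.mp hv).2 hw huv
  · rintro (rfl | rfl)
    · rfl
    · exact hurParity_neg hv.1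

theorem hurUnitMod2_of_hurUnit {x : ℍ[ℚ]} (hx : hurUnit x) : hurUnitMod2 x := by
  obtain ⟨hx, y, hy, hxy, hyx⟩ := hx
  have h0 : (0 : ℍ[ℚ]) ∈ Hur := ⟨0, 0, 0, 0, by ext <;> simp⟩
  exact ⟨hx, y, hy, ⟨0, h0, by rw [hxy, sub_self, mul_zero]⟩,
    ⟨0, h0, by rw [hyx, sub_self, mul_zero]⟩⟩

theorem exists_hurUnit_hurParity_eq {p : ZMod 2 × ZMod 2 × ZMod 2 × ZMod 2}
    (hp : parityNorm p = 1) : ∃ u, hurUnit u ∧ hurParity u = p := by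
  -- the listed coordinates are those of the units `1, i, j, k` and `(±1 ± i ± j + k)/2`
  have hlift : ∀ p : ZMod 2 × ZMod 2 × ZMod 2 × ZMod 2, parityNorm p = 1 →
      ∃ v ∈ ([(1, 0, 0, 0), (0, 1, 0, 0), (0, 0, 1, 0), (-1, -1, -1, 2), (0, 0, 0, 1),
        (-1, 0, 0, 1), (0, -1, 0, 1), (0, 0, -1, 1), (-1, -1, 0, 1), (-1, 0, -1, 1),
        (0, -1, -1, 1), (-1, -1, -1, 1)] : List (ℤ × ℤ × ℤ × ℤ)),
        hurNorm v.1 v.2.1 v.2.2.1 v.2.2.2 = 1 ∧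
          ((v.1 : ZMod 2), (v.2.1 : ZMod 2), (v.2.2.1 : ZMod 2), (v.2.2.2 : ZMod 2)) = p := by
    decide
  obtain ⟨⟨a, b, c, d⟩, -, hnorm, hpar⟩ := hlift p hp
  refine ⟨hurElt a b c d, hurUnit_iff.mpr ⟨hurElt_mem a b c d, ?_⟩, ?_⟩
  · rw [normSq_hurElt, hnorm, Int.cast_one]
  · rw [hurParity_hurElt, hpar]

theorem card_parityNorm_eq_one :
    Nat.card {p : ZMod 2 × ZMod 2 × ZMod 2 × ZMod 2 | parityNorm p = 1} = 12 := by
  rw [Nat.card_eq_fintype_card]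
  decide

theorem range_hurParity_hurUnit :
    Set.range (fun u : {x : ℍ[ℚ] // hurUnit x} => hurParity u) = {p | parityNorm p = 1} := by
  ext p
  refine ⟨?_, fun hp => ?_⟩
  · rintro ⟨⟨u, hu⟩, rfl⟩
    exact (hurUnitMod2_iff.mp (hurUnitMod2_of_hurUnit hu)).2
  · obtain ⟨u, hu, rfl⟩ := exists_hurUnit_hurParity_eq hp
    exact ⟨⟨u, hu⟩, rfl⟩

theorem range_hurParity_hurUnitMod2 :
    Set.range (fun x : {x : ℍ[ℚ] // hurUnitMod2 x} => hurParity x) =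
      {p | parityNorm p = 1} := by
  ext p
  refine ⟨?_, fun hp => ?_⟩
  · rintro ⟨⟨x, hx⟩, rfl⟩
    exact (hurUnitMod2_iff.mp hx).2
  · obtain ⟨u, hu, rfl⟩ := exists_hurUnit_hurParity_eq hp
    exact ⟨⟨u, hurUnitMod2_of_hurUnit hu⟩, rfl⟩

theorem Nat.card_quot_eq_card_range {α β : Type*} {r : α → α → Prop} (f : α → β)
    (hr : ∀ x y, r x y ↔ f x = f y) : Nat.card (Quot r) = Nat.card (Set.range f) :=
  Nat.card_congr ((Quot.congrRight hr).trans (Setoid.quotientKerEquivRange f))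

/-- `O^×/{±1}` has order 12 for the Hurwitz order `O`, and reduction mod `2O`
is a bijection from `O^×/{±1}` onto `(O/2O)^×`: every class of `O/2O` invertible mod `2O`
contains a unit of `O`, unique up to sign; in particular `(O/2O)^×` (the quotient of the
invertible-mod-`2O` elements by congruence mod `2O`) also has order 12. -/
theorem stmt_17 :
    Nat.card (Quot (fun (u v : {x : ℍ[ℚ] // hurUnit x}) =>
        (u : ℍ[ℚ]) = (v : ℍ[ℚ]) ∨ (u : ℍ[ℚ]) = -(v : ℍ[ℚ]))) = 12 ∧
    (∀ α ∈ Hur, hurUnitMod2 α →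
      ∃ u : ℍ[ℚ], hurUnit u ∧ (∃ w ∈ Hur, α - u = 2 * w) ∧
        ∀ u' : ℍ[ℚ], hurUnit u' → (∃ w ∈ Hur, α - u' = 2 * w) → u' = u ∨ u' = -u) ∧
    Nat.card (Quot (fun (x y : {x : ℍ[ℚ] // hurUnitMod2 x}) =>
        ∃ w ∈ Hur, (x : ℍ[ℚ]) - (y : ℍ[ℚ]) = 2 * w)) = 12 := by
  refine ⟨?_, fun α hα hα2 => ?_, ?_⟩
  · rw [Nat.card_quot_eq_card_range (fun u : {x : ℍ[ℚ] // hurUnit x} => hurParity u)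
      (fun u v => (hurParity_eq_iff_of_hurUnit u.2 v.2).symm), range_hurParity_hurUnit,
      card_parityNorm_eq_one]
  · obtain ⟨u, hu, hαu⟩ := exists_hurUnit_hurParity_eq (hurUnitMod2_iff.mp hα2).2
    refine ⟨u, hu, (exists_two_mul_iff_hurParity_eq hα hu.1).mpr hαu.symm,
      fun u' hu' hαu' => ?_⟩
    rw [← hurParity_eq_iff_of_hurUnit hu' hu, hαu,
      ← (exists_two_mul_iff_hurParity_eq hα hu'.1).mp hαu']
  · rw [Nat.card_quot_eq_card_range (fun x : {x : ℍ[ℚ] // hurUnitMod2 x} => hurParity x)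
      (fun x y => exists_two_mul_iff_hurParity_eq x.2.1 y.2.1),
      range_hurParity_hurUnitMod2, card_parityNorm_eq_one]
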